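/- Let n,k ∈ ℕ with 2 ≤ k ≤ n−2, let 𝒫=(P,w) be a weighted pseudostar of kind (n,k) with L(P)=[n], and let ℋ be the hierarchy over [n] associated to P, with edges e_J for J ∈ ℋ as in the definition. Then for every J ∈ ℋ and every k-subset I of [n], the minimal subtree of P containing I contains the edge e_J if and only if I∩J ≠ ∅ and I ⊄ J. -/

import Mathlib

open scoped Classical
open Finset

noncomputable section

/-- The total weight of the minimal subtree of a tree `G` spanning the vertex set `A`:
the sum of the weights of those edges of `G` that lie on every walk between some pair
of vertices of `A` (in a tree, these are exactly the edges of the minimal subtree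
containing `A`). -/
def treeWeight {V : Type} [Fintype V] (G : SimpleGraph V) (w : Sym2 V → ℝ)
    (A : Finset V) : ℝ :=
  ∑ e ∈ (Finset.univ : Finset (Sym2 V)),
    if e ∈ G.edgeSet ∧ ∃ a ∈ A, ∃ b ∈ A, ∀ p : G.Walk a b, e ∈ p.edges then w e else 0

/-- A weighted finite tree whose set of leaves is (the image of) `α`. -/
structure WTree (α : Type) [Fintype α] : Type 1 where
  V : Type
  fintypeV : Fintype V
  G : SimpleGraph V
  isTree : G.IsTree
  w : Sym2 V → ℝ
  label : α → V
  label_inj : Function.Injective label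
  leaf_iff : ∀ v : V, (G.neighborSet v).ncard = 1 ↔ v ∈ Set.range label

attribute [instance] WTree.fintypeV

namespace WTree

variable {α : Type} [Fintype α]

/-- The `k`-weight `D_I` : the weight of the minimal subtree containing the leaves
labelled by `I`. -/
def D (T : WTree α) (I : Finset α) : ℝ := treeWeight T.G T.w (I.image T.label)

/-- A node is a vertex of degree `> 2`. -/
def IsNode (T : WTree α) (v : T.V) : Prop := 2 < (T.G.neighborSet v).ncard

/-- Two vertices are neighbours if the path between them contains exactly one node. -/
def Neighbours (T : WTree α) (a b : T.V) : Prop :=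
  a ≠ b ∧ ∃ p : T.G.Walk a b, p.IsPath ∧
    (p.support.toFinset.filter (fun v => T.IsNode v)).card = 1

/-- Two leaves (given by their labels) are neighbours. -/
def LeafNbr (T : WTree α) (i j : α) : Prop := T.Neighbours (T.label i) (T.label j)

/-- A set of leaves is a cherry if any two of its elements are neighbours. -/
def IsCherry (T : WTree α) (C : Finset α) : Prop :=
  ∀ i ∈ C, ∀ j ∈ C, i ≠ j → T.LeafNbr i j

/-- A cherry is complete if it is not strictly contained in another cherry. -/
def IsCompleteCherry (T : WTree α) (C : Finset α) : Prop :=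
  T.IsCherry C ∧ ∀ C' : Finset α, T.IsCherry C' → ¬ C ⊂ C'

/-- Buneman's index `⟨i,j|l,m⟩` : in the subtree spanned by the four leaves, `i,j` are
neighbours, `l,m` are neighbours and `i,l` are not neighbours; equivalently, the path
from `i` to `j` is disjoint from the path from `l` to `m`. -/
def Buneman (T : WTree α) (i j l m : α) : Prop :=
  i ≠ j ∧ l ≠ m ∧
  ∃ (p : T.G.Walk (T.label i) (T.label j)) (q : T.G.Walk (T.label l) (T.label m)),
    p.IsPath ∧ q.IsPath ∧ ∀ v, v ∈ p.support → v ∉ q.support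

/-- The edge `e` lies on the (unique) path between `a` and `b`. -/
def edgeBetween (T : WTree α) (a b : T.V) (e : Sym2 T.V) : Prop :=
  ∀ p : T.G.Walk a b, e ∈ p.edges

/-- The set of leaf labels lying on the `u`-side of the edge `{u,v}`. -/
def sideLeaves (T : WTree α) (u v : T.V) : Finset α :=
  Finset.univ.filter fun i => T.edgeBetween (T.label i) v s(u, v)

/-- A pseudostar of kind `(n,k)` (with `n = #α`): every edge divides the set of leaves
into two sets such that at least one of them has cardinality `≥ k`. -/
def IsPseudostar (T : WTree α) (k : ℕ) : Prop :=
  ∀ u v : T.V, T.G.Adj u v →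
    k ≤ (T.sideLeaves u v).card ∨ k ≤ (T.sideLeaves v u).card

/-- A tree is essential if it has no vertices of degree 2. -/
def IsEssential (T : WTree α) : Prop := ∀ v : T.V, (T.G.neighborSet v).ncard ≠ 2

/-- The edge `e` lies on the twig of the leaf labelled `i`, i.e. on the path from that
leaf to the nearest node (equivalently, on the path from the leaf to every node). -/
def OnTwig (T : WTree α) (i : α) (e : Sym2 T.V) : Prop :=
  ∀ w : T.V, T.IsNode w → T.edgeBetween (T.label i) w e

/-- An edge is internal if it is an edge of the tree lying on no twig. -/
def IsInternalEdge (T : WTree α) (e : Sym2 T.V) : Prop :=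
  e ∈ T.G.edgeSet ∧ ∀ i : α, ¬ T.OnTwig i e

/-- All internal edges have nonzero weight. -/
def InternalNonzero (T : WTree α) : Prop := ∀ e, T.IsInternalEdge e → T.w e ≠ 0

/-- All edges have positive weight. -/
def PositiveWeighted (T : WTree α) : Prop := ∀ e ∈ T.G.edgeSet, 0 < T.w e

/-- All weights are nonnegative and all internal edges have positive weight. -/
def NNIPWeighted (T : WTree α) : Prop :=
  (∀ e ∈ T.G.edgeSet, 0 ≤ T.w e) ∧ ∀ e, T.IsInternalEdge e → 0 < T.w e

/-- The edge `e` belongs to the minimal subtree containing the leaves labelled by `I`. -/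
def inMinSubtree (T : WTree α) (I : Finset α) (e : Sym2 T.V) : Prop :=
  e ∈ T.G.edgeSet ∧ ∃ a ∈ I, ∃ b ∈ I, T.edgeBetween (T.label a) (T.label b) e

end WTree

/-- Isomorphism of weighted trees fixing the labelled leaves. -/
def WIso {α : Type} [Fintype α] (T T' : WTree α) : Prop :=
  ∃ φ : T.V ≃ T'.V,
    (∀ a b : T.V, T.G.Adj a b ↔ T'.G.Adj (φ a) (φ b)) ∧
    (∀ a b : T.V, T.G.Adj a b → T.w s(a, b) = T'.w s(φ a, φ b)) ∧
    ∀ i : α, φ (T.label i) = T'.label i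

/-- A family indexed by the `k`-subsets of `α` is l-treelike if it is realized by a
weighted tree with leaf set `α`. -/
def IsLTreelike (α : Type) [Fintype α] (k : ℕ) (D : Finset α → ℝ) : Prop :=
  ∃ T : WTree α, ∀ I : Finset α, I.card = k → T.D I = D I

/-- p-l-treelike : realized by a positive-weighted tree with leaf set `α`. -/
def IsPLTreelike (α : Type) [Fintype α] (k : ℕ) (D : Finset α → ℝ) : Prop :=
  ∃ T : WTree α, T.PositiveWeighted ∧ ∀ I : Finset α, I.card = k → T.D I = D I

/-- nn-ip-l-treelike : realized by a nonnegative-weighted, internal-positive-weighted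
tree with leaf set `α`. -/
def IsNNIPLTreelike (α : Type) [Fintype α] (k : ℕ) (D : Finset α → ℝ) : Prop :=
  ∃ T : WTree α, T.NNIPWeighted ∧ ∀ I : Finset α, I.card = k → T.D I = D I

/-- p-treelike : realized on a subset of the vertices of a positive-weighted tree. -/
def IsPTreelike (n k : ℕ) (D : Finset (Fin n) → ℝ) : Prop :=
  ∃ (V : Type) (_ : Fintype V) (G : SimpleGraph V) (w : Sym2 V → ℝ) (f : Fin n → V),
    G.IsTree ∧ Function.Injective f ∧ (∀ e ∈ G.edgeSet, 0 < w e) ∧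
    ∀ I : Finset (Fin n), I.card = k → treeWeight G w (I.image f) = D I


/-- A hierarchy: a set system in which any two members intersect in `∅` or in one
of the two. -/
def IsHierarchy {β : Type} (ℋ : Set (Finset β)) : Prop :=
  ∀ H ∈ ℋ, ∀ H' ∈ ℋ, H ∩ H' = ∅ ∨ H ∩ H' = H ∨ H ∩ H' = H'

/-- The element `Σ_{H ∈ ℋ, H ∩ A ≠ ∅, H ⊉ A} H` of the free ℤ-module on the clusters. -/
def hsum {β : Type} (ℋ : Set (Finset β)) (A : Finset β) : Finset β →₀ ℤ :=
  ∑ᶠ H ∈ {H : Finset β | H ∈ ℋ ∧ (H ∩ A).Nonempty ∧ ¬ A ⊆ H}, Finsupp.single H 1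

/-- `m` is a minimal cluster of `ℋ` containing `t`. -/
def IsMinCluster {β : Type} (ℋ : Set (Finset β)) (t : β) (m : Finset β) : Prop :=
  m ∈ ℋ ∧ t ∈ m ∧ ∀ H ∈ ℋ, t ∈ H → ¬ H ⊂ m

/-- `M` is a maximal cluster of `ℋ` containing `t`. -/
def IsMaxCluster {β : Type} (ℋ : Set (Finset β)) (t : β) (M : Finset β) : Prop :=
  M ∈ ℋ ∧ t ∈ M ∧ ∀ H ∈ ℋ, t ∈ H → ¬ M ⊂ H

/-- `M` is a maximal cluster of `ℋ` containing the cluster `J`. -/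
def IsMaxClusterContaining {β : Type} (ℋ : Set (Finset β)) (J M : Finset β) : Prop :=
  M ∈ ℋ ∧ J ⊆ M ∧ ∀ H ∈ ℋ, J ⊆ H → ¬ M ⊂ H

section FamHierarchy

variable (n k : ℕ) (D : Finset (Fin n) → ℝ)

/-- `𝒞⁰` : the sets `Z` of cardinality `≥ 2` such that for all `i,j ∈ Z` the quantity
`D_{i,X} - D_{j,X}` does not depend on `X ∈ ([n] - {i,j} choose k-1)`. -/
def famC0 : Set (Finset (Fin n)) :=
  {Z | 2 ≤ Z.card ∧ ∀ i ∈ Z, ∀ j ∈ Z, ∀ X X' : Finset (Fin n),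
    X.card = k - 1 → i ∉ X → j ∉ X → X'.card = k - 1 → i ∉ X' → j ∉ X' →
    D (insert i X) - D (insert j X) = D (insert i X') - D (insert j X')}

/-- `𝒞̲⁰` : the maximal elements of `𝒞⁰`. -/
def famMaxC0 : Set (Finset (Fin n)) :=
  {Z | Z ∈ famC0 n k D ∧ ∀ Z' ∈ famC0 n k D, ¬ Z ⊂ Z'}

/-- Condition (b) in the definition of `𝒢^s` : there are `R, S` in
`([n]-{i,j,x,y} choose k-2)` with `D_{ijR} + D_{xyR} ≠ D_{ixR} + D_{jyR}` and
`D_{ijS} + D_{xyS} ≠ D_{iyS} + D_{jxS}`. -/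
def famCondB (i j x y : Fin n) : Prop :=
  ∃ R S : Finset (Fin n),
    R.card = k - 2 ∧ i ∉ R ∧ j ∉ R ∧ x ∉ R ∧ y ∉ R ∧
    S.card = k - 2 ∧ i ∉ S ∧ j ∉ S ∧ x ∉ S ∧ y ∉ S ∧
    D (insert i (insert j R)) + D (insert x (insert y R)) ≠
      D (insert i (insert x R)) + D (insert j (insert y R)) ∧
    D (insert i (insert j S)) + D (insert x (insert y S)) ≠
      D (insert i (insert y S)) + D (insert j (insert x S))

/-- Condition (b) in the definition of `𝒞^s` (with the roles of the pairs permuted). -/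
def famCondB' (i j x y : Fin n) : Prop :=
  ∃ R S : Finset (Fin n),
    R.card = k - 2 ∧ i ∉ R ∧ j ∉ R ∧ x ∉ R ∧ y ∉ R ∧
    S.card = k - 2 ∧ i ∉ S ∧ j ∉ S ∧ x ∉ S ∧ y ∉ S ∧
    D (insert i (insert x R)) + D (insert j (insert y R)) ≠
      D (insert i (insert j R)) + D (insert x (insert y R)) ∧
    D (insert i (insert x S)) + D (insert j (insert y S)) ≠
      D (insert i (insert y S)) + D (insert j (insert x S))

/-- `𝒢⁰`. -/
def famG0 : Set (Finset (Fin n)) :=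
  {Z | Z ∈ famMaxC0 n k D ∧ Z.card ≤ n - k ∧
    ∀ i ∈ Z, ∀ j ∈ Z, ∀ x y : Fin n, x ∉ Z → y ∉ Z →
      (({i, j} : Finset (Fin n)) ∈ famMaxC0 n k D ∧
        ({x, y} : Finset (Fin n)) ∈ famMaxC0 n k D) ∨
      famCondB n k D i j x y}

/-- `𝒞^s`, relative to the surviving set `N = [n]^s`. -/
def famCs (N : Finset (Fin n)) : Set (Finset (Fin n)) :=
  {Z | Z ⊆ N ∧ 2 ≤ Z.card ∧ ∀ i ∈ Z, ∀ j ∈ Z, ∀ x y : Fin n,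
    x ∈ N → y ∈ N → x ≠ i → x ≠ j → y ≠ i → y ≠ j →
    ¬ (({i, x} : Finset (Fin n)) ∈ famMaxC0 n k D ∧
        ({j, y} : Finset (Fin n)) ∈ famMaxC0 n k D) ∧
    ¬ famCondB' n k D i j x y}

/-- `𝒞̲^s` : the maximal elements of `𝒞^s`. -/
def famMaxCs (N : Finset (Fin n)) : Set (Finset (Fin n)) :=
  {Z | Z ∈ famCs n k D N ∧ ∀ Z' ∈ famCs n k D N, ¬ Z ⊂ Z'}

/-- The chain relation expressing that `y0` descends from `y` through the history
`hs = [𝒢⁰, …, 𝒢^{s-1}]` of pruned families. -/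
def descChain : List (Set (Finset (Fin n))) → Fin n → Fin n → Prop
  | [], y0, y => y0 = y
  | G :: rest, y0, y =>
      ∃ y1 : Fin n, (y1 = y0 ∨ ∃ Z ∈ G, y0 ∈ Z ∧ y1 ∈ Z) ∧ descChain rest y1 y

/-- `∂Z` : the set of elements of `[n]` descending from an element of `Z`. -/
def bdry (hs : List (Set (Finset (Fin n)))) (Z : Finset (Fin n)) : Finset (Fin n) :=
  Finset.univ.filter fun y0 => ∃ ys ∈ Z, descChain n hs y0 ys

/-- `𝒢^s` (for `s ≥ 1`), relative to the surviving set `N = [n]^s` and the history `hs`. -/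
def famGs (N : Finset (Fin n)) (hs : List (Set (Finset (Fin n)))) :
    Set (Finset (Fin n)) :=
  {Z | Z ∈ famMaxCs n k D N ∧ (bdry n hs Z).card ≤ n - k ∧
    ∀ i ∈ Z, ∀ j ∈ Z, ∀ x y : Fin n, x ∉ Z → y ∉ Z →
      (({i, j} : Finset (Fin n)) ∈ famMaxC0 n k D ∧
        ({x, y} : Finset (Fin n)) ∈ famMaxC0 n k D) ∨
      famCondB n k D i j x y}

/-- The pair `([n]^s, [𝒢⁰, …, 𝒢^{s-1}])`. -/
def famStage : ℕ → Finset (Fin n) × List (Set (Finset (Fin n)))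
  | 0 => (Finset.univ, [])
  | s + 1 =>
      let p := famStage s
      let G := if s = 0 then famG0 n k D else famGs n k D p.1 p.2
      (p.1.filter fun y => ∀ Z ∈ G, y ∈ Z → ∀ z ∈ Z, y ≤ z, p.2 ++ [G])

/-- `𝒢^s`. -/
def famGAt (s : ℕ) : Set (Finset (Fin n)) :=
  if s = 0 then famG0 n k D
  else famGs n k D (famStage n k D s).1 (famStage n k D s).2

/-- The hierarchy over `[n]` associated to the family `{D_I}`. -/
def famHier : Set (Finset (Fin n)) :=
  {A | ∃ s : ℕ, ∃ Z ∈ famGAt n k D s, A = bdry n (famStage n k D s).2 Z}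

/-- Condition (i): if `ℋ` covers `[n]` then the number of maximal clusters is not 2. -/
def CondI {n : ℕ} (ℋ : Set (Finset (Fin n))) : Prop :=
  (∀ x : Fin n, ∃ H ∈ ℋ, x ∈ H) →
    {H | H ∈ ℋ ∧ ∀ H' ∈ ℋ, ¬ H ⊂ H'}.ncard ≠ 2

/-- Condition (ii): for `q ∈ {1,…,n-1}`, `s ∈ {1, k-1}`, `W, W' ∈ ([n] choose s)`,
the sum `Σ_i (D_{W Z_i} - D_{W' Z_i})` takes the same value on all choices of the
`Z_i ∈ ([n]-W-W' choose k-s)` on which the corresponding element of the free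
ℤ-module `⊕_{H ∈ ℋ} ℤ H` is the same. -/
def CondII (n k : ℕ) (D : Finset (Fin n) → ℝ) (ℋ : Set (Finset (Fin n))) : Prop :=
  ∀ q : ℕ, 1 ≤ q → q ≤ n - 1 → ∀ s : ℕ, s = 1 ∨ s = k - 1 →
    ∀ W W' : Finset (Fin n), W.card = s → W'.card = s →
    ∀ Z Z' : ℕ → Finset (Fin n),
      (∀ i < q, (Z i).card = k - s ∧ Disjoint (Z i) W ∧ Disjoint (Z i) W') →
      (∀ i < q, (Z' i).card = k - s ∧ Disjoint (Z' i) W ∧ Disjoint (Z' i) W') →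
      (∑ i ∈ Finset.range q, (hsum ℋ (W ∪ Z i) - hsum ℋ (W' ∪ Z i)) =
        ∑ i ∈ Finset.range q, (hsum ℋ (W ∪ Z' i) - hsum ℋ (W' ∪ Z' i))) →
      (∑ i ∈ Finset.range q, (D (W ∪ Z i) - D (W' ∪ Z i)) =
        ∑ i ∈ Finset.range q, (D (W ∪ Z' i) - D (W' ∪ Z' i)))

end FamHierarchy

section Pruning

namespace WTree

variable {α : Type} [Fintype α]

/-- The subtree of `T` induced on the vertex set `S` (as a graph on the ambient
vertex set). Pruning a cherry, i.e. contracting the twigs of its leaves, is realized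
by deleting the vertices of those twigs except the stalk. -/
def restrictG (T : WTree α) (S : Set T.V) : SimpleGraph T.V where
  Adj a b := T.G.Adj a b ∧ a ∈ S ∧ b ∈ S
  symm := ⟨fun _ _ h => ⟨h.1.symm, h.2.2, h.2.1⟩⟩
  loopless := ⟨fun a h => T.G.loopless.irrefl a h.1⟩

/-- Degree in the pruned tree. -/
def rdeg (T : WTree α) (S : Set T.V) (v : T.V) : ℕ :=
  ((T.restrictG S).neighborSet v).ncard

/-- Leaf of the pruned tree. -/
def rleaf (T : WTree α) (S : Set T.V) (v : T.V) : Prop := v ∈ S ∧ T.rdeg S v = 1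

/-- Node (vertex of degree `> 2`) of the pruned tree. -/
def rnode (T : WTree α) (S : Set T.V) (v : T.V) : Prop := v ∈ S ∧ 2 < T.rdeg S v

/-- Neighbours in the pruned tree: the path between them contains exactly one node. -/
def rnbr (T : WTree α) (S : Set T.V) (a b : T.V) : Prop :=
  a ≠ b ∧ ∃ p : (T.restrictG S).Walk a b, p.IsPath ∧
    (p.support.toFinset.filter (fun v => T.rnode S v)).card = 1

/-- Cherry of the pruned tree: a set of leaves any two of which are neighbours. -/
def rCherry (T : WTree α) (S : Set T.V) (C : Set T.V) : Prop :=
  (∀ v ∈ C, T.rleaf S v) ∧ ∀ a ∈ C, ∀ b ∈ C, a ≠ b → T.rnbr S a b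

/-- Complete cherry of the pruned tree. -/
def rCompleteCherry (T : WTree α) (S : Set T.V) (C : Set T.V) : Prop :=
  T.rCherry S C ∧ ∀ C' : Set T.V, T.rCherry S C' → ¬ C ⊂ C'

/-- The stalk of a cherry: the node lying on the path from any element of the cherry
to any node. -/
def rStalk (T : WTree α) (S : Set T.V) (C : Set T.V) (v : T.V) : Prop :=
  T.rnode S v ∧ ∀ a ∈ C, ∀ w : T.V, T.rnode S w →
    ∀ p : (T.restrictG S).Walk a w, p.IsPath → v ∈ p.support

/-- `v` is on the twig of the leaf `ℓ` in the pruned tree: `v` is not a node and lies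
on the path from `ℓ` to every node. -/
def rTwigVert (T : WTree α) (S : Set T.V) (ℓ v : T.V) : Prop :=
  v ∈ S ∧ ¬ T.rnode S v ∧ ∀ w : T.V, T.rnode S w →
    ∀ p : (T.restrictG S).Walk ℓ w, p.IsPath → v ∈ p.support

/-- The vertex set obtained by pruning the cherry `C` (contracting the twigs of its
leaves). -/
def pruneCherry (T : WTree α) (S : Set T.V) (C : Set T.V) : Set T.V :=
  S \ {v | ∃ ℓ ∈ C, T.rTwigVert S ℓ v}

/-- A good cherry: a complete cherry whose stalk is a leaf of the tree obtained by
pruning it. -/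
def rGoodCherry (T : WTree α) (S : Set T.V) (C : Set T.V) : Prop :=
  T.rCompleteCherry S C ∧ ∃ v : T.V, T.rStalk S C v ∧ T.rleaf (T.pruneCherry S C) v

/-- The leaf labelled `x` (of the original tree) descends from the leaf `y` of the
pruned tree: the path in the original tree from `x` to `y` contains no leaf of the
pruned tree other than `y`. -/
def descLeaf (T : WTree α) (S : Set T.V) (x : α) (y : T.V) : Prop :=
  T.rleaf S y ∧ ∀ p : T.G.Walk (T.label x) y, p.IsPath →
    ∀ v ∈ p.support, T.rleaf S v → v = y

/-- `∂C` : the set of labels descending from an element of `C`. -/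
def bdryV (T : WTree α) (S : Set T.V) (C : Set T.V) : Finset α :=
  Finset.univ.filter fun x => ∃ y ∈ C, T.descLeaf S x y

/-- One pruning step: prune all good cherries `C` with `#∂C ≤ r`. -/
def pruneStage (T : WTree α) (r : ℕ) (S : Set T.V) : Set T.V :=
  S \ {v | ∃ C : Set T.V, T.rGoodCherry S C ∧ (T.bdryV S C).card ≤ r ∧
    ∃ ℓ ∈ C, T.rTwigVert S ℓ v}

/-- The vertex set of `P^s`. -/
def stageSet (T : WTree α) (r : ℕ) : ℕ → Set T.V
  | 0 => Set.univ
  | s + 1 => T.pruneStage r (T.stageSet r s)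

/-- The hierarchy associated to the pseudostar `T` (with `r = n - k`): the sets `∂C`
for `C` a good cherry of some `P^s` with `#∂C ≤ r`; when `L(P^s)` is the union of two
complete cherries both with `#∂C_i ≤ r`, only the one whose `∂` contains the minimum
of `∂C₁ ∪ ∂C₂` is included. -/
def psHier [LinearOrder α] (T : WTree α) (r : ℕ) : Set (Finset α) :=
  {A | ∃ (s : ℕ) (C : Set T.V),
    T.rGoodCherry (T.stageSet r s) C ∧
    (T.bdryV (T.stageSet r s) C).card ≤ r ∧
    A = T.bdryV (T.stageSet r s) C ∧
    ∀ C₂ : Set T.V, T.rCompleteCherry (T.stageSet r s) C₂ →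
      (∀ v : T.V, T.rleaf (T.stageSet r s) v ↔ v ∈ C ∪ C₂) →
      (T.bdryV (T.stageSet r s) C₂).card ≤ r →
      ∃ m ∈ T.bdryV (T.stageSet r s) C,
        ∀ x ∈ T.bdryV (T.stageSet r s) C ∪ T.bdryV (T.stageSet r s) C₂, m ≤ x}

/-- The edge `e` belongs to the twig of the leaf `v` in the pruned tree on `S`. -/
def rOnTwigEdge (T : WTree α) (S : Set T.V) (v : T.V) (e : Sym2 T.V) : Prop :=
  e ∈ (T.restrictG S).edgeSet ∧ ∀ w : T.V, T.rnode S w →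
    ∀ p : (T.restrictG S).Walk v w, p.IsPath → e ∈ p.edges

end WTree

end Pruning

/-!
Deleting the twig edge `e = s(x, y)` of the stalk `v` splits the tree into two components, and
the minimal subtree spanned by `I` contains `e` exactly when `I` has leaves in both. So it
suffices to show that `∂C` is the set of leaves in the component of `v`.

Every stage `P^s` spans a subtree, and every vertex pruned so far reaches it only through one of
its leaves, its gate (`IsPrunedSubtree`); the gate of a leaf `i` is the leaf of `P^s` from which
`i` descends. A leaf descending from `ℓ ∈ C` reaches `v` without crossing `e`: its path to `ℓ`
meets `P^s` only in `ℓ`, and the twig from `ℓ` to `v` is pruned. Conversely, if the leaf `i` is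
on the side of `v`, so is its gate `z`. Since `e` lies on every path from `v` to a node of
`P^{s+1}`, the only leaf of `P^{s+1}` on that side is `v`. Hence `z` was pruned, as a leaf of a
cherry whose stalk is a leaf of `P^{s+1}` on the side of `v`, i.e. `v` itself; as `C` is
complete, that cherry lies in `C`, so `z ∈ C`.
-/

theorem Finset.exists_mem_not_iff_mem_iff {β : Type} [DecidableEq β] {I J : Finset β} :
    (∃ a ∈ I, ∃ b ∈ I, ¬(a ∈ J ↔ b ∈ J)) ↔ (I ∩ J).Nonempty ∧ ¬I ⊆ J := by
  simp only [Finset.Nonempty, Finset.mem_inter, Finset.not_subset]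
  constructor
  · rintro ⟨a, ha, b, hb, hab⟩
    by_cases haJ : a ∈ J
    · exact ⟨⟨a, ha, haJ⟩, b, hb, fun hbJ => hab (iff_of_true haJ hbJ)⟩
    · exact ⟨⟨b, hb, by tauto⟩, a, ha, haJ⟩
  · rintro ⟨⟨a, ha, haJ⟩, b, hb, hbJ⟩
    exact ⟨a, ha, b, hb, fun h => hbJ (h.1 haJ)⟩

namespace SimpleGraph

variable {V : Type} {G : SimpleGraph V}

namespace Walk

theorem mem_support_of_forall_adj_mem_or_eq {A : Set V} {z : V}
    (hA : ∀ x ∈ A, ∀ y, G.Adj x y → y ∈ A ∨ y = z) {a b : V} (ha : a ∈ A) (hb : b ∉ A)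
    (q : G.Walk a b) : z ∈ q.support := by
  induction q with
  | nil => exact absurd ha hb
  | cons hadj q ih =>
    rcases hA _ ha _ hadj with hc | rfl
    · exact List.mem_cons_of_mem _ (ih hc hb)
    · exact List.mem_cons_of_mem _ q.start_mem_support

theorem mk_notMem_edges_of_forall_eq {A : Set V} {a b x y w : V} (p : G.Walk a b)
    (hx : x ∈ A) (hy : y ∈ A) (hxy : x ≠ y) (h : ∀ u ∈ p.support, u ∈ A → u = w) :
    s(x, y) ∉ p.edges := fun he =>
  hxy ((h x (p.fst_mem_support_of_mem_edges he) hx).trans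
    (h y (p.snd_mem_support_of_mem_edges he) hy).symm)

theorem exists_adj_mem_support_of_ne {a b : V} (p : G.Walk a b) (hab : a ≠ b) :
    ∃ n ∈ p.support, G.Adj a n := by
  cases p with
  | nil => exact absurd rfl hab
  | cons h q => exact ⟨_, List.mem_cons_of_mem _ q.start_mem_support, h⟩

variable [DecidableEq V]

theorem IsPath.eq_of_mem_support_takeUntil_of_mem_support_dropUntil {a b u x : V}
    {p : G.Walk a b} (hp : p.IsPath) (hu : u ∈ p.support)
    (hx₁ : x ∈ (p.takeUntil u hu).support) (hx₂ : x ∈ (p.dropUntil u hu).support) : x = u := by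
  by_contra hxu
  have hnd := hp.support_nodup
  rw [← p.take_spec hu, support_append] at hnd
  rw [← (p.dropUntil u hu).cons_tail_support, List.mem_cons] at hx₂
  exact List.disjoint_of_nodup_append hnd hx₁ (hx₂.resolve_left hxu)

theorem IsPath.exists_adj_ne_adj_of_mem_support {a b u : V} {p : G.Walk a b} (hp : p.IsPath)
    (hu : u ∈ p.support) (hua : u ≠ a) (hub : u ≠ b) :
    ∃ n₁ ∈ p.support, ∃ n₂ ∈ p.support, n₁ ≠ n₂ ∧ G.Adj u n₁ ∧ G.Adj u n₂ := by
  obtain ⟨n₁, hn₁, hadj₁⟩ := (p.takeUntil u hu).reverse.exists_adj_mem_support_of_ne hua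
  obtain ⟨n₂, hn₂, hadj₂⟩ := (p.dropUntil u hu).exists_adj_mem_support_of_ne hub
  rw [support_reverse, List.mem_reverse] at hn₁
  refine ⟨n₁, p.support_takeUntil_subset_support hu hn₁, n₂,
    p.support_dropUntil_subset_support hu hn₂, fun h => ?_, hadj₁, hadj₂⟩
  subst h
  exact hadj₁.ne (hp.eq_of_mem_support_takeUntil_of_mem_support_dropUntil hu hn₁ hn₂).symm

end Walk

theorem forall_mem_edges_iff_not_reachable_deleteEdges {x y a b : V} :
    (∀ p : G.Walk a b, s(x, y) ∈ p.edges) ↔ ¬(G.deleteEdges {s(x, y)}).Reachable a b := by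
  rw [reachable_deleteEdges_iff_exists_walk, not_exists_not]

theorem IsAcyclic.eq_of_isPath (hG : G.IsAcyclic) {a b : V} {p q : G.Walk a b}
    (hp : p.IsPath) (hq : q.IsPath) : p = q :=
  congrArg Subtype.val ((hG.subsingleton_path a b).elim ⟨p, hp⟩ ⟨q, hq⟩)

theorem IsAcyclic.mem_edges_iff_not_reachable_deleteEdges (hG : G.IsAcyclic) {x y a b : V}
    {p : G.Walk a b} (hp : p.IsPath) :
    s(x, y) ∈ p.edges ↔ ¬(G.deleteEdges {s(x, y)}).Reachable a b := by
  classical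
  refine ⟨fun he hr => ?_, p.mem_edges_of_not_reachable_deleteEdges⟩
  obtain ⟨q, hq⟩ := reachable_deleteEdges_iff_exists_walk.1 hr
  rw [hG.eq_of_isPath hp q.bypass_isPath] at he
  exact hq (q.edges_bypass_subset_edges he)

theorem Walk.reachable_deleteEdges_or {x y u : V} (p : G.Walk u x) :
    (G.deleteEdges {s(x, y)}).Reachable u x ∨ (G.deleteEdges {s(x, y)}).Reachable u y := by
  induction p with
  | nil => exact Or.inl .rfl
  | @cons u c x hadj q ih =>
    by_cases he : s(u, c) = s(x, y)
    · rcases Sym2.eq_iff.1 he with ⟨rfl, -⟩ | ⟨rfl, -⟩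
      · exact Or.inl .rfl
      · exact Or.inr .rfl
    · have hadj' : (G.deleteEdges {s(x, y)}).Adj u c := deleteEdges_adj.2 ⟨hadj, he⟩
      exact ih.imp hadj'.reachable.trans hadj'.reachable.trans

/-- Deleting an edge splits a connected graph into at most two components. -/
theorem Connected.reachable_deleteEdges_iff (hG : G.Connected) (x y v : V) {a b : V} :
    (G.deleteEdges {s(x, y)}).Reachable a b ↔
      ((G.deleteEdges {s(x, y)}).Reachable a v ↔ (G.deleteEdges {s(x, y)}).Reachable b v) := by
  set R := (G.deleteEdges {s(x, y)}).Reachable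
  have side (u : V) : R u x ∨ R u y := (hG.preconnected u x).some.reachable_deleteEdges_or
  refine ⟨fun h => ⟨h.symm.trans, h.trans⟩, fun h => ?_⟩
  by_cases hav : R a v
  · exact hav.trans (h.1 hav).symm
  have hbv : ¬R b v := mt h.2 hav
  rcases side v with hv | hv <;> rcases side a with ha | ha <;> rcases side b with hb | hb
  all_goals first
    | exact ha.trans hb.symm
    | exact absurd (ha.trans hv.symm) hav
    | exact absurd (hb.trans hv.symm) hbv

end SimpleGraph

namespace WTree

open SimpleGraph

variable {α : Type} [Fintype α] {T : WTree α} {S S' C C' : Set T.V} {r : ℕ} {i : α}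
  {a b c t u v w x y z ℓ : T.V}

lemma restrictG_le (S : Set T.V) : T.restrictG S ≤ T.G := fun _ _ h => h.1

def restrictWalk (p : T.G.Walk a b) (hp : ∀ u ∈ p.support, u ∈ S) : (T.restrictG S).Walk a b :=
  p.transfer _ fun e he => by
    induction e with
    | h x y => exact ⟨p.adj_of_mem_edges he, hp _ (p.fst_mem_support_of_mem_edges he),
        hp _ (p.snd_mem_support_of_mem_edges he)⟩

@[simp] lemma support_restrictWalk (p : T.G.Walk a b) (hp : ∀ u ∈ p.support, u ∈ S) :
    (restrictWalk p hp).support = p.support := Walk.support_transfer _ _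

@[simp] lemma edges_restrictWalk (p : T.G.Walk a b) (hp : ∀ u ∈ p.support, u ∈ S) :
    (restrictWalk p hp).edges = p.edges := Walk.edges_transfer _ _

lemma isPath_restrictWalk {p : T.G.Walk a b} (hp : p.IsPath) (hpS : ∀ u ∈ p.support, u ∈ S) :
    (restrictWalk p hpS).IsPath := hp.transfer _

lemma rdeg_mono (h : S' ⊆ S) (u : T.V) : T.rdeg S' u ≤ T.rdeg S u :=
  Set.ncard_le_ncard (fun _ hy => ⟨hy.1, h hy.2.1, h hy.2.2⟩) (Set.toFinite _)

lemma rdeg_le (S : Set T.V) (u : T.V) : T.rdeg S u ≤ (T.G.neighborSet u).ncard :=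
  Set.ncard_le_ncard (fun _ hy => hy.1) (Set.toFinite _)

lemma ncard_le_rdeg {N : Set T.V} (h : ∀ n ∈ N, (T.restrictG S).Adj u n) :
    N.ncard ≤ T.rdeg S u :=
  Set.ncard_le_ncard h (Set.toFinite _)

lemma one_le_rdeg (h : (T.restrictG S).Adj u x) : 1 ≤ T.rdeg S u := by
  simpa using ncard_le_rdeg (N := {x}) (by simpa using h)

lemma two_le_rdeg (h₁ : (T.restrictG S).Adj u x) (h₂ : (T.restrictG S).Adj u y) (hxy : x ≠ y) :
    2 ≤ T.rdeg S u := by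
  simpa [Set.ncard_pair hxy] using ncard_le_rdeg (N := {x, y}) (by simp [h₁, h₂])

lemma three_le_rdeg (h₁ : (T.restrictG S).Adj u x) (h₂ : (T.restrictG S).Adj u y)
    (h₃ : (T.restrictG S).Adj u z) (hxy : x ≠ y) (hxz : x ≠ z) (hyz : y ≠ z) :
    3 ≤ T.rdeg S u := by
  have hcard : ({x, y, z} : Set T.V).ncard = 3 :=
    Set.ncard_eq_three.2 ⟨x, y, z, hxy, hxz, hyz, rfl⟩
  simpa [hcard] using ncard_le_rdeg (N := {x, y, z}) (by simp [h₁, h₂, h₃])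

lemma rleaf.not_rnode (h : T.rleaf S a) : ¬T.rnode S a := fun h' => by
  have := h.2
  have := h'.2
  omega

lemma rleaf.exists_adj (h : T.rleaf S z) : ∃ t, (T.restrictG S).Adj z t := by
  obtain ⟨t, ht⟩ := Set.ncard_eq_one.1 h.2
  exact ⟨t, (Set.ext_iff.1 ht t).2 rfl⟩

lemma rleaf_of_subset (hz : T.rleaf S z) (hS : S' ⊆ S) (h : (T.restrictG S').Adj z x) :
    T.rleaf S' z :=
  ⟨h.2.1, le_antisymm (hz.2 ▸ rdeg_mono hS z) (one_le_rdeg h)⟩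

section PathDegree

variable {p : T.G.Walk a b}

lemma two_le_rdeg_of_mem_support (hp : p.IsPath) (hpS : ∀ u ∈ p.support, u ∈ S)
    (hu : u ∈ p.support) (hua : u ≠ a) (hub : u ≠ b) : 2 ≤ T.rdeg S u := by
  obtain ⟨n₁, hn₁, n₂, hn₂, hne, h₁, h₂⟩ := hp.exists_adj_ne_adj_of_mem_support hu hua hub
  exact two_le_rdeg ⟨h₁, hpS u hu, hpS n₁ hn₁⟩ ⟨h₂, hpS u hu, hpS n₂ hn₂⟩ hne

lemma three_le_rdeg_of_mem_support (hp : p.IsPath) (hpS : ∀ u ∈ p.support, u ∈ S)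
    (hu : u ∈ p.support) (hua : u ≠ a) (hub : u ≠ b) (hx : (T.restrictG S).Adj u x)
    (hxp : x ∉ p.support) : 3 ≤ T.rdeg S u := by
  obtain ⟨n₁, hn₁, n₂, hn₂, hne, h₁, h₂⟩ := hp.exists_adj_ne_adj_of_mem_support hu hua hub
  exact three_le_rdeg ⟨h₁, hpS u hu, hpS n₁ hn₁⟩ ⟨h₂, hpS u hu, hpS n₂ hn₂⟩ hx hne
    (fun h => hxp (h ▸ hn₁)) (fun h => hxp (h ▸ hn₂))

lemma two_le_rdeg_start (hpS : ∀ u ∈ p.support, u ∈ S) (hab : a ≠ b)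
    (hx : (T.restrictG S).Adj a x) (hxp : x ∉ p.support) : 2 ≤ T.rdeg S a := by
  obtain ⟨n, hn, hadj⟩ := p.exists_adj_mem_support_of_ne hab
  exact two_le_rdeg ⟨hadj, hpS a p.start_mem_support, hpS n hn⟩ hx fun h => hxp (h ▸ hn)

end PathDegree

structure IsPrunedSubtree (T : WTree α) (S : Set T.V) : Prop where
  exists_isPath : ∀ a ∈ S, ∀ b ∈ S, ∃ p : T.G.Walk a b, p.IsPath ∧ ∀ u ∈ p.support, u ∈ S
  exists_gate : ∀ u ∉ S, ∃ z, T.rleaf S z ∧ ∀ b ∈ S, ∀ q : T.G.Walk u b, z ∈ q.support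

lemma rleaf_label (hI : T.IsPrunedSubtree S) (h : T.label i ∈ S) : T.rleaf S (T.label i) := by
  obtain ⟨t, ht⟩ := Set.ncard_eq_one.1 ((T.leaf_iff _).2 ⟨i, rfl⟩)
  have hadj : T.G.Adj (T.label i) t := (Set.ext_iff.1 ht t).2 rfl
  by_cases htS : t ∈ S
  · refine ⟨h, le_antisymm ?_ (one_le_rdeg ⟨hadj, h, htS⟩)⟩
    simpa [ht] using rdeg_le S (T.label i)
  · obtain ⟨z, hz, hgate⟩ := hI.exists_gate t htS
    have hz' : z = t ∨ z = T.label i := by simpa using hgate _ h (.cons hadj.symm .nil)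
    rcases hz' with rfl | rfl
    · exact absurd hz.1 htS
    · exact hz

lemma exists_descLeaf (hI : T.IsPrunedSubtree S) (i : α) :
    ∃ z, T.descLeaf S i z ∧ ∀ b ∈ S, ∀ q : T.G.Walk (T.label i) b, z ∈ q.support := by
  by_cases hiS : T.label i ∈ S
  · refine ⟨T.label i, ⟨rleaf_label hI hiS, fun p hp u hu _ => ?_⟩,
      fun _ _ q => q.start_mem_support⟩
    simpa [Walk.eq_nil_iff_nil.2 (Walk.isPath_iff_nil.1 hp)] using hu
  · obtain ⟨z, hz, hgate⟩ := hI.exists_gate _ hiS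
    refine ⟨z, ⟨hz, fun p hp u hu hu' => ?_⟩, hgate⟩
    by_contra hne
    exact Walk.endpoint_notMem_support_takeUntil hp hu (Ne.symm hne) (hgate u hu'.1 _)

lemma descLeaf.eq_of_mem_support (hI : T.IsPrunedSubtree S) (hy : T.descLeaf S i y)
    {p : T.G.Walk (T.label i) y} (hp : p.IsPath) (hu : u ∈ p.support) (huS : u ∈ S) : u = y := by
  obtain ⟨z, hz, hgate⟩ := exists_descLeaf hI i
  have hzu := hgate u huS (p.takeUntil u hu)
  obtain rfl : z = y := hy.2 p hp z (p.support_takeUntil_subset_support hu hzu) hz.1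
  by_contra hne
  exact Walk.endpoint_notMem_support_takeUntil hp hu (Ne.symm hne) hzu

lemma rStalk.mem_support (hst : T.rStalk S C v) (ha : a ∈ C) (hw : T.rnode S w)
    {p : T.G.Walk a w} (hp : p.IsPath) (hpS : ∀ u ∈ p.support, u ∈ S) : v ∈ p.support := by
  simpa using hst.2 a ha w hw (restrictWalk p hpS) (isPath_restrictWalk hp hpS)

lemma rStalk.mono (hst : T.rStalk S C v) (h : C' ⊆ C) : T.rStalk S C' v :=
  ⟨hst.1, fun a ha => hst.2 a (h ha)⟩

lemma rCherry.singleton (h : T.rleaf S a) : T.rCherry S {a} :=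
  ⟨by simpa using h, by simp +contextual⟩

lemma exists_twig_path (hI : T.IsPrunedSubtree S) (hch : T.rCherry S C) (hst : T.rStalk S C v)
    (hℓ : ℓ ∈ C) : ∃ p : T.G.Walk ℓ v, p.IsPath ∧ (∀ u ∈ p.support, u ∈ S) ∧
      ∀ u, T.rTwigVert S ℓ u ↔ u ∈ p.support ∧ u ≠ v := by
  obtain ⟨p, hp, hpS⟩ := hI.exists_isPath ℓ (hch.1 ℓ hℓ).1 v hst.1.1
  refine ⟨p, hp, hpS, fun u => ⟨fun ⟨_, hun, hall⟩ => ⟨?_, fun h => hun (h ▸ hst.1)⟩, ?_⟩⟩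
  · simpa using hall v hst.1 (restrictWalk p hpS) (isPath_restrictWalk hp hpS)
  rintro ⟨hup, huv⟩
  have htS : ∀ w ∈ (p.takeUntil u hup).support, w ∈ S :=
    fun w hw => hpS w (p.support_takeUntil_subset_support hup hw)
  refine ⟨hpS u hup, fun hnode => Walk.endpoint_notMem_support_takeUntil hp hup (Ne.symm huv)
    (hst.mem_support hℓ hnode (hp.takeUntil hup) htS), fun w hw q hq => ?_⟩
  set q' := q.mapLe (restrictG_le S)
  have hv : v ∈ q'.support := by simpa [q'] using hst.2 ℓ hℓ w hw q hq
  have hq' : (q'.takeUntil v hv).IsPath := ((Walk.isPath_mapLe _).2 hq).takeUntil hv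
  rw [T.isTree.isAcyclic.eq_of_isPath hp hq'] at hup
  simpa [q'] using q'.support_takeUntil_subset_support hv hup

lemma eq_of_rTwigVert_of_rleaf (hI : T.IsPrunedSubtree S) (hch : T.rCherry S C)
    (hst : T.rStalk S C v) (hℓ : ℓ ∈ C) (hu : T.rTwigVert S ℓ u) (hleaf : T.rleaf S u) :
    u = ℓ := by
  obtain ⟨p, hp, hpS, htwig⟩ := exists_twig_path hI hch hst hℓ
  obtain ⟨hup, huv⟩ := (htwig u).1 hu
  by_contra hne
  have := two_le_rdeg_of_mem_support hp hpS hup hne huv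
  have := hleaf.2
  omega

lemma rTwigVert_or_eq_of_adj (hI : T.IsPrunedSubtree S) (hch : T.rCherry S C)
    (hst : T.rStalk S C v) (hℓ : ℓ ∈ C) (hx : T.rTwigVert S ℓ x)
    (hadj : (T.restrictG S).Adj x y) : T.rTwigVert S ℓ y ∨ y = v := by
  obtain ⟨p, hp, hpS, htwig⟩ := exists_twig_path hI hch hst hℓ
  obtain ⟨hxp, hxv⟩ := (htwig x).1 hx
  by_cases hyp : y ∈ p.support
  · exact (em (y = v)).symm.imp (fun hyv => (htwig y).2 ⟨hyp, hyv⟩) id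
  exfalso
  by_cases hxℓ : x = ℓ
  · subst hxℓ
    have := two_le_rdeg_start hpS hxv hadj hyp
    have := (hch.1 x hℓ).2
    omega
  · have := three_le_rdeg_of_mem_support hp hpS hxp hxℓ hxv hadj hyp
    have : ¬2 < T.rdeg S x := fun h => hx.2.1 ⟨hx.1, h⟩
    omega

def twigSet (T : WTree α) (S C : Set T.V) : Set T.V :=
  {u | ∃ ℓ ∈ C, T.rTwigVert S ℓ u}

lemma twigSet_subset : T.twigSet S C ⊆ S := fun _ ⟨_, _, h⟩ => h.1

lemma mem_twigSet_self (hch : T.rCherry S C) (hℓ : ℓ ∈ C) : ℓ ∈ T.twigSet S C :=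
  ⟨ℓ, hℓ, (hch.1 ℓ hℓ).1, (hch.1 ℓ hℓ).not_rnode, fun _ _ p _ => p.start_mem_support⟩

/-- The twigs of `C` together with the vertices pruned earlier that hang from them. -/
def twigRegion (T : WTree α) (S C : Set T.V) : Set T.V :=
  T.twigSet S C ∪
    {y | y ∉ S ∧ ∀ b ∈ S, ∀ q : T.G.Walk y b, ∃ u ∈ q.support, u ∈ T.twigSet S C}

lemma twigRegion_adj (hI : T.IsPrunedSubtree S) (hch : T.rCherry S C) (hst : T.rStalk S C v) :
    ∀ x ∈ T.twigRegion S C, ∀ y, T.G.Adj x y → y ∈ T.twigRegion S C ∨ y = v := by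
  rintro x (⟨ℓ, hℓ, hx⟩ | ⟨hxS, hx⟩) y hadj
  · by_cases hyS : y ∈ S
    · exact (rTwigVert_or_eq_of_adj hI hch hst hℓ hx ⟨hadj, hx.1, hyS⟩).imp
        (fun h => Or.inl ⟨ℓ, hℓ, h⟩) id
    · -- the gate of `y` can only be `x`, so `y` hangs from the twig
      obtain ⟨z, hz, hgate⟩ := hI.exists_gate y hyS
      have hz' : z = y ∨ z = x := by simpa using hgate x hx.1 (.cons hadj.symm .nil)
      obtain rfl : z = x := hz'.resolve_left fun h => hyS (h ▸ hz.1)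
      exact Or.inl (Or.inr ⟨hyS, fun b hb q => ⟨z, hgate b hb q, ℓ, hℓ, hx⟩⟩)
  · by_cases hyS : y ∈ S
    · obtain ⟨u, hu, hut⟩ := hx y hyS (.cons hadj .nil)
      have hu' : u = x ∨ u = y := by simpa using hu
      obtain rfl : u = y := hu'.resolve_left fun h => hxS (h ▸ twigSet_subset hut)
      exact Or.inl (Or.inl hut)
    · refine Or.inl (Or.inr ⟨hyS, fun b hb q => ?_⟩)
      obtain ⟨u, hu, hut⟩ := hx b hb (.cons hadj q)
      rcases List.mem_cons.1 hu with rfl | hu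
      · exact absurd (twigSet_subset hut) hxS
      · exact ⟨u, hu, hut⟩

lemma rStalk.mem_support_of_mem_twigRegion (hI : T.IsPrunedSubtree S) (hch : T.rCherry S C)
    (hst : T.rStalk S C v) (hu : u ∈ T.twigRegion S C) (hb : b ∈ S) (hbt : b ∉ T.twigSet S C)
    (q : T.G.Walk u b) : v ∈ q.support :=
  Walk.mem_support_of_forall_adj_mem_or_eq (twigRegion_adj hI hch hst) hu
    (fun h => h.elim hbt fun h => h.1 hb) q

lemma eq_of_rnode_of_mem_support (hst : T.rStalk S C v) (hst' : T.rStalk S C' v)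
    (ha : a ∈ C) (hb : b ∈ C') {P : T.G.Walk a b} (hP : P.IsPath)
    (hPS : ∀ u ∈ P.support, u ∈ S) (hu : u ∈ P.support) (hnode : T.rnode S u) : u = v := by
  have h₁ := hst.mem_support ha hnode (hP.takeUntil hu)
    fun w hw => hPS w (P.support_takeUntil_subset_support hu hw)
  have h₂ := hst'.mem_support hb hnode ((Walk.isPath_reverse_iff _).2 (hP.dropUntil hu))
    fun w hw => hPS w (P.support_dropUntil_subset_support hu (by simpa using hw))
  rw [Walk.support_reverse, List.mem_reverse] at h₂
  exact (hP.eq_of_mem_support_takeUntil_of_mem_support_dropUntil hu h₁ h₂).symm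

lemma rnbr_of_rStalk (hI : T.IsPrunedSubtree S) (hch : T.rCherry S C) (hch' : T.rCherry S C')
    (hst : T.rStalk S C v) (hst' : T.rStalk S C' v) (ha : a ∈ C) (hb : b ∈ C') (hne : a ≠ b) :
    T.rnbr S a b := by
  obtain ⟨P, hP, hPS⟩ := hI.exists_isPath a (hch.1 a ha).1 b (hch'.1 b hb).1
  have hcha : T.rCherry S {a} := rCherry.singleton (hch.1 a ha)
  have hsta : T.rStalk S {a} v := hst.mono (Set.singleton_subset_iff.2 ha)
  -- `b` is not on the twig of `a`, so the path from `a` to `b` leaves it through the stalk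
  have hvP : v ∈ P.support := by
    refine hsta.mem_support_of_mem_twigRegion hI hcha (Or.inl (mem_twigSet_self hcha rfl))
      (hch'.1 b hb).1 ?_ P
    rintro ⟨ℓ, rfl, htw⟩
    exact hne (eq_of_rTwigVert_of_rleaf hI hcha hsta rfl htw (hch'.1 b hb)).symm
  refine ⟨hne, restrictWalk P hPS, isPath_restrictWalk hP hPS, Finset.card_eq_one.2 ⟨v, ?_⟩⟩
  ext u
  simp only [Finset.mem_filter, List.mem_toFinset, support_restrictWalk, Finset.mem_singleton]
  exact ⟨fun h => eq_of_rnode_of_mem_support hst hst' ha hb hP hPS h.1 h.2,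
    by rintro rfl; exact ⟨hvP, hst.1⟩⟩

lemma rCherry.union (hI : T.IsPrunedSubtree S) (hch : T.rCherry S C) (hch' : T.rCherry S C')
    (hst : T.rStalk S C v) (hst' : T.rStalk S C' v) : T.rCherry S (C ∪ C') := by
  refine ⟨fun u hu => hu.elim (hch.1 u) (hch'.1 u), ?_⟩
  rintro a (ha | ha) b (hb | hb) hne
  · exact hch.2 a ha b hb hne
  · exact rnbr_of_rStalk hI hch hch' hst hst' ha hb hne
  · exact rnbr_of_rStalk hI hch' hch hst' hst ha hb hne
  · exact hch'.2 a ha b hb hne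

lemma rCompleteCherry.subset_of_rStalk (hI : T.IsPrunedSubtree S) (hC : T.rCompleteCherry S C)
    (hch' : T.rCherry S C') (hst : T.rStalk S C v) (hst' : T.rStalk S C' v) : C' ⊆ C := by
  intro b hb
  by_contra hbC
  exact hC.2 _ (hC.1.union hI hch' hst hst')
    ⟨Set.subset_union_left, fun h => hbC (h (Or.inr hb))⟩

lemma rGoodCherry.nonempty (hgood : T.rGoodCherry S C) : C.Nonempty := by
  rw [Set.nonempty_iff_ne_empty]
  rintro rfl
  obtain ⟨v, hst, hlf⟩ := hgood.2
  exact hlf.not_rnode (by simpa [pruneCherry] using hst.1)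

lemma rStalk.unique (hI : T.IsPrunedSubtree S) (hch : T.rCherry S C) (hne : C.Nonempty)
    (hst : T.rStalk S C v) (hst' : T.rStalk S C t) : v = t := by
  obtain ⟨a, ha⟩ := hne
  obtain ⟨p, hp, hpS⟩ := hI.exists_isPath a (hch.1 a ha).1 t hst'.1.1
  have hv := hst.mem_support ha hst'.1 hp hpS
  by_contra hvt
  exact Walk.endpoint_notMem_support_takeUntil hp hv (Ne.symm hvt)
    (hst'.mem_support ha hst.1 (hp.takeUntil hv)
      fun w hw => hpS w (p.support_takeUntil_subset_support hv hw))

lemma pruneStage_subset : T.pruneStage r S ⊆ S := fun _ h => h.1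

lemma rnode.mem_pruneStage (h : T.rnode S v) : v ∈ T.pruneStage r S :=
  ⟨h.1, fun ⟨_, _, _, _, _, htw⟩ => htw.2.1 h⟩

lemma exists_of_notMem_pruneStage (huS : u ∈ S) (hu : u ∉ T.pruneStage r S) :
    ∃ C, T.rGoodCherry S C ∧ (T.bdryV S C).card ≤ r ∧ u ∈ T.twigSet S C := by
  by_contra h
  exact hu ⟨huS, fun ⟨C, hgood, hsmall, htw⟩ => h ⟨C, hgood, hsmall, htw⟩⟩

lemma notMem_pruneStage_of_mem_twigSet (hgood : T.rGoodCherry S C)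
    (hsmall : (T.bdryV S C).card ≤ r) (hu : u ∈ T.twigSet S C) : u ∉ T.pruneStage r S :=
  fun h => h.2 ⟨C, hgood, hsmall, hu⟩

lemma pruneStage_subset_pruneCherry (hgood : T.rGoodCherry S C)
    (hsmall : (T.bdryV S C).card ≤ r) : T.pruneStage r S ⊆ T.pruneCherry S C :=
  fun _ hu => ⟨hu.1, fun h => notMem_pruneStage_of_mem_twigSet hgood hsmall h hu⟩

lemma exists_rStalk_of_notMem_pruneStage (hI : T.IsPrunedSubtree S)
    (hu : u ∈ T.pruneStage r S) (hadj : (T.restrictG S).Adj u t) (ht : t ∉ T.pruneStage r S) :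
    ∃ C, T.rGoodCherry S C ∧ t ∈ T.twigSet S C ∧ T.rStalk S C u := by
  obtain ⟨C, hgood, hsmall, ℓ, hℓ, htw⟩ := exists_of_notMem_pruneStage hadj.2.2 ht
  obtain ⟨v, hst, -⟩ := hgood.2
  rcases rTwigVert_or_eq_of_adj hI hgood.1.1 hst hℓ htw hadj.symm with h | rfl
  · exact absurd hu (notMem_pruneStage_of_mem_twigSet hgood hsmall ⟨ℓ, hℓ, h⟩)
  · exact ⟨C, hgood, ⟨ℓ, hℓ, htw⟩, hst⟩

lemma rleaf.pruneStage (hI : T.IsPrunedSubtree S) (hz : T.rleaf S z)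
    (hzS : z ∈ T.pruneStage r S) : T.rleaf (T.pruneStage r S) z := by
  obtain ⟨t, ht⟩ := hz.exists_adj
  by_cases htS : t ∈ T.pruneStage r S
  · exact rleaf_of_subset hz pruneStage_subset ⟨ht.1, hzS, htS⟩
  · obtain ⟨C, -, -, hst⟩ := exists_rStalk_of_notMem_pruneStage hI hzS ht htS
    exact absurd hst.1 hz.not_rnode

lemma rGoodCherry.rleaf_pruneStage (hI : T.IsPrunedSubtree S) (hgood : T.rGoodCherry S C)
    (hsmall : (T.bdryV S C).card ≤ r) (hst : T.rStalk S C v) :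
    T.rleaf (T.pruneStage r S) v := by
  obtain ⟨v₀, hst₀, hlf⟩ := hgood.2
  obtain rfl := hst.unique hI hgood.1.1 hgood.nonempty hst₀
  obtain ⟨t, ht⟩ := hlf.exists_adj
  have hvS : v ∈ T.pruneStage r S := hst.1.mem_pruneStage
  refine rleaf_of_subset hlf (pruneStage_subset_pruneCherry hgood hsmall) ⟨ht.1, hvS, ?_⟩
  by_contra htS
  obtain ⟨C', hgood', ⟨ℓ, hℓ, htw⟩, hst'⟩ :=
    exists_rStalk_of_notMem_pruneStage hI hvS ⟨ht.1, ht.2.1.1, ht.2.2.1⟩ htS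
  exact ht.2.2.2 ⟨ℓ, hgood.1.subset_of_rStalk hI hgood'.1.1 hst hst' hℓ, htw⟩

lemma IsPrunedSubtree.pruneStage (hI : T.IsPrunedSubtree S) (r : ℕ) :
    T.IsPrunedSubtree (T.pruneStage r S) where
  exists_isPath a ha b hb := by
    obtain ⟨p, hp, hpS⟩ := hI.exists_isPath a ha.1 b hb.1
    refine ⟨p, hp, fun u hu => by_contra fun huS => ?_⟩
    obtain ⟨C, hgood, hsmall, hut⟩ := exists_of_notMem_pruneStage (hpS u hu) huS
    obtain ⟨v, hst, -⟩ := hgood.2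
    have hsep {c : T.V} (hc : c ∈ T.pruneStage r S) (q : T.G.Walk u c) : v ∈ q.support :=
      hst.mem_support_of_mem_twigRegion hI hgood.1.1 (Or.inl hut) hc.1
        (fun h => notMem_pruneStage_of_mem_twigSet hgood hsmall h hc) q
    have h₁ := hsep ha (p.takeUntil u hu).reverse
    rw [Walk.support_reverse, List.mem_reverse] at h₁
    obtain rfl := hp.eq_of_mem_support_takeUntil_of_mem_support_dropUntil hu h₁
      (hsep hb (p.dropUntil u hu))
    obtain ⟨ℓ, -, htw⟩ := hut
    exact htw.2.1 hst.1
  exists_gate u hu := by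
    obtain ⟨C, hgood, hsmall, hreg⟩ | ⟨z, hz, hzS, hgate⟩ :
        (∃ C, T.rGoodCherry S C ∧ (T.bdryV S C).card ≤ r ∧ u ∈ T.twigRegion S C) ∨
        ∃ z, T.rleaf S z ∧ z ∈ T.pruneStage r S ∧
          ∀ b ∈ S, ∀ q : T.G.Walk u b, z ∈ q.support := by
      by_cases huS : u ∈ S
      · obtain ⟨C, hgood, hsmall, hut⟩ := exists_of_notMem_pruneStage huS hu
        exact Or.inl ⟨C, hgood, hsmall, Or.inl hut⟩
      obtain ⟨z, hz, hgate⟩ := hI.exists_gate u huS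
      by_cases hzS : z ∈ T.pruneStage r S
      · exact Or.inr ⟨z, hz, hzS, hgate⟩
      obtain ⟨C, hgood, hsmall, hzt⟩ := exists_of_notMem_pruneStage hz.1 hzS
      exact Or.inl ⟨C, hgood, hsmall, Or.inr ⟨huS, fun b hb q => ⟨z, hgate b hb q, hzt⟩⟩⟩
    · obtain ⟨v, hst, -⟩ := hgood.2
      exact ⟨v, hgood.rleaf_pruneStage hI hsmall hst, fun b hb q =>
        hst.mem_support_of_mem_twigRegion hI hgood.1.1 hreg hb.1
          (fun h => notMem_pruneStage_of_mem_twigSet hgood hsmall h hb) q⟩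
    · exact ⟨z, hz.pruneStage hI hzS, fun b hb => hgate b hb.1⟩

lemma isPrunedSubtree_stageSet (T : WTree α) (r : ℕ) : ∀ s, T.IsPrunedSubtree (T.stageSet r s)
  | 0 =>
    { exists_isPath := fun a _ b _ =>
        let ⟨p⟩ := T.isTree.connected.preconnected a b
        ⟨p.bypass, p.bypass_isPath, fun _ _ => trivial⟩
      exists_gate := fun _ hu => absurd trivial hu }
  | s + 1 => (isPrunedSubtree_stageSet T r s).pruneStage r

lemma reachable_deleteEdges_of_forall_eq (hxy : (T.restrictG S').Adj x y) (p : T.G.Walk a b)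
    (h : ∀ u ∈ p.support, u ∈ S' → u = w) : (T.G.deleteEdges {s(x, y)}).Reachable a b :=
  reachable_deleteEdges_iff_exists_walk.2
    ⟨p, p.mk_notMem_edges_of_forall_eq hxy.2.1 hxy.2.2 hxy.ne h⟩

lemma exists_path_to_rStalk (hI : T.IsPrunedSubtree S) (hgood : T.rGoodCherry S C)
    (hsmall : (T.bdryV S C).card ≤ r) (hst : T.rStalk S C v) (hℓ : ℓ ∈ C) :
    ∃ p : T.G.Walk ℓ v, ∀ u ∈ p.support, u ∈ T.pruneStage r S → u = v := by
  obtain ⟨p, -, -, htwig⟩ := exists_twig_path hI hgood.1.1 hst hℓ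
  refine ⟨p, fun u hu huS => by_contra fun huv => ?_⟩
  exact notMem_pruneStage_of_mem_twigSet hgood hsmall ⟨ℓ, hℓ, (htwig u).2 ⟨hu, huv⟩⟩ huS

lemma exists_rnode_mem_support (hI : T.IsPrunedSubtree S) (hne : v ≠ u) (hv : T.rleaf S v)
    (hu : T.rleaf S u) {π : T.G.Walk v u} (hπ : π.IsPath) (hπS : ∀ w ∈ π.support, w ∈ S)
    (hc : c ∈ S) (hcπ : c ∉ π.support) : ∃ w ∈ π.support, T.rnode S w := by
  obtain ⟨ρ, -, hρS⟩ := hI.exists_isPath c hc v hv.1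
  obtain ⟨d, hd, hd₁, hd₂⟩ :=
    ρ.exists_boundary_dart {w | w ∉ π.support} hcπ (by simp)
  simp only [Set.mem_ofPred_eq, not_not] at hd₁ hd₂
  have hadj : (T.restrictG S).Adj d.snd d.fst := ⟨d.adj.symm,
    hρS _ (ρ.dart_snd_mem_support_of_mem_darts hd), hρS _ (ρ.dart_fst_mem_support_of_mem_darts hd)⟩
  refine ⟨d.snd, hd₂, hπS _ hd₂, ?_⟩
  by_cases hdv : d.snd = v
  · rw [hdv] at hadj
    have := two_le_rdeg_start hπS hne hadj hd₁
    have := hv.2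
    omega
  by_cases hdu : d.snd = u
  · rw [hdu] at hadj
    have := two_le_rdeg_start (p := π.reverse) (by simpa using hπS) hne.symm hadj (by simp [hd₁])
    have := hu.2
    omega
  have := three_le_rdeg_of_mem_support hπ hπS hd₂ hdv hdu hadj hd₁
  omega

lemma eq_of_rleaf_of_reachable (hI : T.IsPrunedSubtree S) (hv : T.rleaf S v)
    (hTwig : T.rOnTwigEdge S v s(x, y)) (hu : T.rleaf S u)
    (hreach : (T.G.deleteEdges {s(x, y)}).Reachable u v) : u = v := by
  have hacyc := T.isTree.isAcyclic
  by_contra hne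
  obtain ⟨π, hπ, hπS⟩ := hI.exists_isPath v hv.1 u hu.1
  -- `π` avoids the twig edge, so it carries no node; hence it covers `S`, twig edge included
  have hπe : s(x, y) ∉ π.edges := fun he =>
    (hacyc.mem_edges_iff_not_reachable_deleteEdges hπ).1 he hreach.symm
  have hR (w) (hw : w ∈ π.support) : (T.G.deleteEdges {s(x, y)}).Reachable v w :=
    reachable_deleteEdges_iff_exists_walk.2
      ⟨π.takeUntil w hw, fun he => hπe (π.edges_takeUntil_subset_edges hw he)⟩
  have hnode (w) (hw : w ∈ π.support) : ¬T.rnode S w := fun hw' =>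
    (hacyc.mem_edges_iff_not_reachable_deleteEdges (hπ.takeUntil hw)).1
      (by simpa using hTwig.2 w hw' _ (isPath_restrictWalk (hπ.takeUntil hw)
        fun z hz => hπS z (π.support_takeUntil_subset_support hw hz))) (hR w hw)
  have hmem (c) (hc : c ∈ S) : c ∈ π.support := by
    by_contra hcπ
    obtain ⟨w, hw, hw'⟩ := exists_rnode_mem_support hI (Ne.symm hne) hv hu hπ hπS hc hcπ
    exact hnode w hw hw'
  have hxy := hTwig.1
  exact isBridge_iff.1 (isAcyclic_iff_forall_isBridge.1 hacyc hxy.1)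
    ((hR x (hmem x hxy.2.1)).symm.trans (hR y (hmem y hxy.2.2)))

lemma reachable_of_mem_bdryV (hI : T.IsPrunedSubtree S) (hgood : T.rGoodCherry S C)
    (hsmall : (T.bdryV S C).card ≤ r) (hst : T.rStalk S C v)
    (hxy : (T.restrictG (T.pruneStage r S)).Adj x y) (hi : i ∈ T.bdryV S C) :
    (T.G.deleteEdges {s(x, y)}).Reachable (T.label i) v := by
  obtain ⟨ℓ, hℓ, hdesc⟩ : ∃ ℓ ∈ C, T.descLeaf S i ℓ := by simpa [bdryV] using hi
  obtain ⟨q, hq, -⟩ := T.isTree.existsUnique_path (T.label i) ℓ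
  obtain ⟨p, hp⟩ := exists_path_to_rStalk hI hgood hsmall hst hℓ
  exact (reachable_deleteEdges_of_forall_eq hxy q fun u hu huS =>
    hdesc.eq_of_mem_support hI hq hu huS.1).trans (reachable_deleteEdges_of_forall_eq hxy p hp)

lemma mem_bdryV_of_reachable (hI : T.IsPrunedSubtree S) (hgood : T.rGoodCherry S C)
    (hsmall : (T.bdryV S C).card ≤ r) (hst : T.rStalk S C v)
    (hTwig : T.rOnTwigEdge (T.pruneStage r S) v s(x, y))
    (hreach : (T.G.deleteEdges {s(x, y)}).Reachable (T.label i) v) : i ∈ T.bdryV S C := by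
  have hI' := hI.pruneStage r
  have hv := hgood.rleaf_pruneStage hI hsmall hst
  obtain ⟨z, hdesc, hgate⟩ := exists_descLeaf hI i
  obtain ⟨q, hq, -⟩ := T.isTree.existsUnique_path (T.label i) v
  have hzq := hgate v hst.1.1 q
  have hqe : s(x, y) ∉ q.edges := fun he =>
    (T.isTree.isAcyclic.mem_edges_iff_not_reachable_deleteEdges hq).1 he hreach
  have hzv : (T.G.deleteEdges {s(x, y)}).Reachable z v := reachable_deleteEdges_iff_exists_walk.2
    ⟨q.dropUntil z hzq, fun he => hqe (q.edges_dropUntil_subset_edges hzq he)⟩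
  -- a surviving `z` would be a leaf of the pruned tree on the side of `v`
  have hzS : z ∉ T.pruneStage r S := fun h => hdesc.1.not_rnode
    (eq_of_rleaf_of_reachable hI' hv hTwig (hdesc.1.pruneStage hI h) hzv ▸ hst.1)
  obtain ⟨C', hgood', hsmall', ℓ, hℓ, htw⟩ := exists_of_notMem_pruneStage hdesc.1.1 hzS
  obtain ⟨v', hst', -⟩ := hgood'.2
  obtain rfl := eq_of_rTwigVert_of_rleaf hI hgood'.1.1 hst' hℓ htw hdesc.1
  obtain ⟨p, hp⟩ := exists_path_to_rStalk hI hgood' hsmall' hst' hℓ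
  obtain rfl : v' = v := eq_of_rleaf_of_reachable hI' hv hTwig
    (hgood'.rleaf_pruneStage hI hsmall' hst')
    ((reachable_deleteEdges_of_forall_eq hTwig.1 p hp).symm.trans hzv)
  simpa [bdryV] using ⟨z, hgood.1.subset_of_rStalk hI hgood'.1.1 hst hst' hℓ, hdesc⟩

theorem mem_bdryV_iff_reachable (hI : T.IsPrunedSubtree S) (hgood : T.rGoodCherry S C)
    (hsmall : (T.bdryV S C).card ≤ r) (hst : T.rStalk S C v)
    (hTwig : T.rOnTwigEdge (T.pruneStage r S) v s(x, y)) (i : α) :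
    i ∈ T.bdryV S C ↔ (T.G.deleteEdges {s(x, y)}).Reachable (T.label i) v :=
  ⟨reachable_of_mem_bdryV hI hgood hsmall hst hTwig.1,
    mem_bdryV_of_reachable hI hgood hsmall hst hTwig⟩

lemma inMinSubtree_iff (I : Finset α) (he : s(x, y) ∈ T.G.edgeSet) :
    T.inMinSubtree I s(x, y) ↔
      ∃ a ∈ I, ∃ b ∈ I, ¬(T.G.deleteEdges {s(x, y)}).Reachable (T.label a) (T.label b) := by
  simp only [inMinSubtree, edgeBetween, forall_mem_edges_iff_not_reachable_deleteEdges, he,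
    true_and]

end WTree

theorem subtree_contains_cluster_edge_general (n k : ℕ) (T : WTree (Fin n)) :
    ∀ J ∈ T.psHier (n - k), ∀ (s : ℕ) (C : Set T.V),
      T.rGoodCherry (T.stageSet (n - k) s) C →
      (T.bdryV (T.stageSet (n - k) s) C).card ≤ n - k →
      J = T.bdryV (T.stageSet (n - k) s) C →
      ∀ v : T.V, T.rStalk (T.stageSet (n - k) s) C v →
      ∀ e : Sym2 T.V, T.rOnTwigEdge (T.stageSet (n - k) (s + 1)) v e →
      ∀ I : Finset (Fin n), I.card = k →
        (T.inMinSubtree I e ↔ (I ∩ J).Nonempty ∧ ¬ I ⊆ J) := by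
  rintro J - s C hgood hsmall rfl v hst e hTwig I -
  induction e using Sym2.ind with | _ x y => ?_
  have hside := WTree.mem_bdryV_iff_reachable (WTree.isPrunedSubtree_stageSet T _ s)
    hgood hsmall hst hTwig
  rw [WTree.inMinSubtree_iff I hTwig.1.1, ← Finset.exists_mem_not_iff_mem_iff]
  simp only [hside, ← T.isTree.connected.reachable_deleteEdges_iff x y v]

/-- **Remark.** Let `2 ≤ k ≤ n-2`, let `𝒫 = (P,w)` be a weighted pseudostar of kind
`(n,k)` with `L(P) = [n]` and let `ℋ` be the hierarchy over `[n]` associated to `P`.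
For every `J ∈ ℋ` (say `J = ∂C` for a good cherry `C` of `P^s`, with associated edge
`e_J` lying on the twig of the stalk of `C` in `P^{s+1}`) and every `k`-subset `I` of
`[n]`, the subtree realizing `D_I(𝒫)` contains `e_J` if and only if `I ∩ J ≠ ∅` and
`I ⊄ J`. -/
theorem subtree_contains_cluster_edge (n k : ℕ) (hk2 : 2 ≤ k) (hkn : k ≤ n - 2)
    (T : WTree (Fin n)) (hps : T.IsPseudostar k) :
    ∀ J ∈ T.psHier (n - k), ∀ (s : ℕ) (C : Set T.V),
      T.rGoodCherry (T.stageSet (n - k) s) C →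
      (T.bdryV (T.stageSet (n - k) s) C).card ≤ n - k →
      J = T.bdryV (T.stageSet (n - k) s) C →
      ∀ v : T.V, T.rStalk (T.stageSet (n - k) s) C v →
      ∀ e : Sym2 T.V, T.rOnTwigEdge (T.stageSet (n - k) (s + 1)) v e →
      ∀ I : Finset (Fin n), I.card = k →
        (T.inMinSubtree I e ↔ (I ∩ J).Nonempty ∧ ¬ I ⊆ J) :=
  subtree_contains_cluster_edge_general n k T
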